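/- Let y, γ, θ : ℝ → ℝ be smooth with y′(x) ≠ 0 for all x. Define the transformed coefficients (for the coordinate change of a second-order operator of weight λ = 2 on the line, with leading coefficient s = 1) G := (y′·γ + y″)/(y′)² and Θ := ((y′)²·θ + 2y′y″·γ + (y″)²)/(y′)⁴, and define the Sturm–Liouville potentials U := ½( γ′ + ½θ ) and Ū := ½( G′/y′ + ½Θ ). Then for all x ∈ ℝ, Ū(x) = y′(x)^{−2} · ( U(x) + ½𝔖[y](x) ), where 𝔖[y] := y‴/y′ − (3/2)(y″/y′)² is the Schwarzian derivative of y; i.e., the Sturm–Liouville potential transforms by the Schwarzian derivative under the transformation laws of the coefficients of a long bracket. -/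

import Mathlib

/-- Transformed connection coefficient `G = (y′γ + y″)/(y′)²` under the change of
coordinate `y` (weight λ = 2, leading coefficient s = 1). -/
noncomputable def gammaTrans (y γ : ℝ → ℝ) : ℝ → ℝ :=
  fun x => (deriv y x * γ x + deriv (deriv y) x) / (deriv y x) ^ 2

/-- Transformed Brans–Dicke coefficient
`Θ = ((y′)²θ + 2y′y″γ + (y″)²)/(y′)⁴`. -/
noncomputable def thetaTrans (y γ θ : ℝ → ℝ) : ℝ → ℝ :=
  fun x => ((deriv y x) ^ 2 * θ x + 2 * deriv y x * deriv (deriv y) x * γ x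
    + (deriv (deriv y) x) ^ 2) / (deriv y x) ^ 4

/-- Sturm–Liouville potential `U = ½(γ′ + ½θ)`. -/
noncomputable def slPotential (γ θ : ℝ → ℝ) : ℝ → ℝ :=
  fun x => (1/2) * (deriv γ x + (1/2) * θ x)

/-- The Schwarzian derivative `𝔖[y] = y‴/y′ − (3/2)(y″/y′)²`. -/
noncomputable def schwarzian (y : ℝ → ℝ) : ℝ → ℝ :=
  fun x => deriv (deriv (deriv y)) x / deriv y x
    - (3/2) * (deriv (deriv y) x / deriv y x) ^ 2

/-- the Sturm–Liouville potential transforms by the Schwarzian derivative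
under the transformation laws of the coefficients of a long bracket:
`Ū = ½(G′/y′ + ½Θ)` satisfies `Ū = (y′)⁻²(U + ½𝔖[y])`. -/
theorem sturm_liouville_potential_schwarzian
    (y γ θ : ℝ → ℝ)
    (hy : ContDiff ℝ (⊤ : ℕ∞) y) (hγ : ContDiff ℝ (⊤ : ℕ∞) γ) (hθ : ContDiff ℝ (⊤ : ℕ∞) θ)
    (hy' : ∀ x, deriv y x ≠ 0) :
    ∀ x, (1/2) * (deriv (gammaTrans y γ) x / deriv y x
          + (1/2) * thetaTrans y γ θ x)
      = (slPotential γ θ x + (1/2) * schwarzian y x) / (deriv y x) ^ 2 := by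
  intro x
  have h1 := (contDiff_infty_iff_deriv.mp (hy.of_le (by simp))).2
  have h2 := (contDiff_infty_iff_deriv.mp h1).2
  have hd1 : HasDerivAt (deriv y) (deriv (deriv y) x) x :=
    ((h1.differentiable (by simp)) x).hasDerivAt
  have hd2 : HasDerivAt (deriv (deriv y)) (deriv (deriv (deriv y)) x) x :=
    ((h2.differentiable (by simp)) x).hasDerivAt
  have hdγ : HasDerivAt γ (deriv γ x) x := ((hγ.differentiable (by simp)) x).hasDerivAt
  have hG : HasDerivAt (gammaTrans y γ)
      (((deriv (deriv y) x * γ x + deriv y x * deriv γ x + deriv (deriv (deriv y)) x)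
          * (deriv y x) ^ 2
        - (deriv y x * γ x + deriv (deriv y) x)
          * (2 * (deriv y x) ^ 1 * deriv (deriv y) x)) / ((deriv y x) ^ 2) ^ 2) x := by
    exact ((hd1.mul hdγ).add hd2).div (hd1.pow 2) (pow_ne_zero 2 (hy' x))
  rw [hG.deriv]
  simp only [thetaTrans, slPotential, schwarzian]
  have h0 := hy' x
  field_simp
  ring
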